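/- Let W_σ ~ N(0, 2σ²) and define E(σ) = E[sigmoid(|W_σ|)]. Then for any σ_2 > σ_1 > 0 and any common mean μ (which does not affect the value), E(σ_2) > E(σ_1). That is, the expected maximum binary softmax probability of logits (z_1, z_2) with z_1, z_2 i.i.d. N(μ, σ²) is strictly increasing in σ. -/

import Mathlib

open MeasureTheory ProbabilityTheory Real
open scoped NNReal

/-!
Since `gaussianReal 0 v` is the image of the standard Gaussian under `x ↦ √v * x`, the expected
confidence at variance `v` is `∫ sigmoid (√v * |x|)` against one fixed measure. For `v < w` the
integrands satisfy `sigmoid (√v * |x|) ≤ sigmoid (√w * |x|)` everywhere, strictly for `x ≠ 0`, and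
the standard Gaussian charges every nonempty open set, so the integrals are strictly ordered.
-/

lemma gaussianReal_zero_eq_map_sqrt_mul (v : ℝ≥0) :
    gaussianReal 0 v = (gaussianReal 0 1).map (√(v : ℝ) * ·) := by
  rw [gaussianReal_map_const_mul, mul_zero, mul_one]
  congr
  ext
  simp

lemma isOpenPosMeasure_gaussianReal (μ : ℝ) {v : ℝ≥0} (hv : v ≠ 0) :
    (gaussianReal μ v).IsOpenPosMeasure :=
  (gaussianReal_absolutelyContinuous' μ hv).isOpenPosMeasure

lemma integral_lt_integral_of_continuous_of_le_of_exists_lt {X : Type*} [TopologicalSpace X]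
    [MeasurableSpace X] {μ : Measure X} [μ.IsOpenPosMeasure] {f g : X → ℝ}
    (hf : Integrable f μ) (hg : Integrable g μ) (hfc : Continuous f) (hgc : Continuous g)
    (hle : f ≤ g) (hlt : ∃ x, f x < g x) :
    ∫ x, f x ∂μ < ∫ x, g x ∂μ := by
  obtain ⟨x₀, hx₀⟩ := hlt
  rw [← sub_pos, ← integral_sub hg hf]
  exact integral_pos_of_integrable_nonneg_nonzero (hgc.sub hfc) (hg.sub hf) (sub_nonneg.2 hle)
    (sub_ne_zero.2 hx₀.ne')

lemma integrable_sigmoid_comp {X : Type*} [MeasurableSpace X] {μ : Measure X} [IsFiniteMeasure μ]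
    {f : X → ℝ} (hf : AEStronglyMeasurable f μ) : Integrable (fun x ↦ sigmoid (f x)) μ :=
  .of_bound (continuous_sigmoid.comp_aestronglyMeasurable hf) 1 <| .of_forall fun x ↦ by
    rw [norm_of_nonneg (sigmoid_nonneg _)]
    exact sigmoid_le_one _

lemma integral_sigmoid_abs_gaussianReal (v : ℝ≥0) :
    ∫ x, sigmoid |x| ∂gaussianReal 0 v = ∫ x, sigmoid (√(v : ℝ) * |x|) ∂gaussianReal 0 1 := by
  rw [gaussianReal_zero_eq_map_sqrt_mul, integral_map (by fun_prop) (by fun_prop)]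
  simp_rw [abs_mul, abs_of_nonneg (sqrt_nonneg _)]

lemma strictMono_integral_sigmoid_abs_gaussianReal :
    StrictMono fun v : ℝ≥0 ↦ ∫ x, sigmoid |x| ∂gaussianReal 0 v := by
  intro v w hvw
  have := isOpenPosMeasure_gaussianReal 0 one_ne_zero
  have hsqrt : √(v : ℝ) < √(w : ℝ) := sqrt_lt_sqrt v.2 hvw
  simp only [integral_sigmoid_abs_gaussianReal]
  refine integral_lt_integral_of_continuous_of_le_of_exists_lt
    (integrable_sigmoid_comp (by fun_prop)) (integrable_sigmoid_comp (by fun_prop))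
    (by fun_prop) (by fun_prop) (fun x ↦ ?_) ⟨1, ?_⟩
  · exact sigmoid_strictMono.monotone (mul_le_mul_of_nonneg_right hsqrt.le (abs_nonneg x))
  · simpa using sigmoid_strictMono hsqrt

theorem expected_confidence_strictMono_general (σ₁ σ₂ : NNReal) (h₁₂ : σ₁ < σ₂) :
    (∫ x, 1 / (1 + Real.exp (-|x|)) ∂(gaussianReal 0 (2 * σ₁ ^ 2)))
      < ∫ x, 1 / (1 + Real.exp (-|x|)) ∂(gaussianReal 0 (2 * σ₂ ^ 2)) := by
  simp only [one_div, ← sigmoid_def]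
  exact strictMono_integral_sigmoid_abs_gaussianReal (by gcongr)

/-- Proposition 1: the expected maximum binary softmax probability,
`E(σ) = E[sigmoid(|W_σ|)]` with `W_σ ~ N(0, 2σ²)`, is strictly increasing in `σ`. -/
theorem expected_confidence_strictMono (σ₁ σ₂ : NNReal) (h₁ : 0 < σ₁) (h₁₂ : σ₁ < σ₂) :
    (∫ x, 1 / (1 + Real.exp (-|x|)) ∂(gaussianReal 0 (2 * σ₁ ^ 2)))
      < ∫ x, 1 / (1 + Real.exp (-|x|)) ∂(gaussianReal 0 (2 * σ₂ ^ 2)) :=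
  expected_confidence_strictMono_general σ₁ σ₂ h₁₂
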